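/- For a multiplicative n-Hom Lie superalgebra N, the quasicentroid QC(N) is closed under the supercommutator [D,E] = DE − (−1)^{|D||E|}ED (i.e. is a Lie superalgebra) if and only if QC(N) is closed under composition (i.e. DE ∈ QC(N) for all homogeneous D, E ∈ QC(N)). -/

import Mathlib

/-!
Over a field of characteristic zero, `DE = ½([D, E] + {D, E})` and `[D, E] = DE - (-1)^{|D||E|} ED`,
so it suffices that the super-anticommutator `{D, E} = DE + (-1)^{|D||E|} ED` of two quasicentroid
elements is always one. Moving `DE` from the first slot of a bracket to slot `i` (first `D`,
then `E`) lands `ED` there with sign `(-1)^{(|D|+|E|)|X_{i-1}|} (-1)^{|D||E|}`, and symmetrically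
for `ED`; since `((-1)^{|D||E|})² = 1` the two terms of `{D, E}` are exchanged with a common sign.
-/

open scoped BigOperators

noncomputable section

variable {𝔽 : Type*} [Field 𝔽]
variable {N : Type*} [AddCommGroup N] [Module 𝔽 N]

/-- The sign `(-1)^g` for `g : ZMod 2`. -/
def sgn (𝔽 : Type*) [Field 𝔽] (g : ZMod 2) : 𝔽 := if g = 0 then 1 else -1

/-- `|X_{i-1}|` : the sum of the degrees `d j` for `j < i`. -/
def psum {m : ℕ} (d : Fin m → ZMod 2) (i : Fin m) : ZMod 2 :=
  ∑ j ∈ Finset.univ.filter (fun j => j < i), d j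

/-- `D` is homogeneous of degree `ξ` with respect to the `ℤ₂`-grading `gr`. -/
def Homog (gr : ZMod 2 → Submodule 𝔽 N) (ξ : ZMod 2) (D : N →ₗ[𝔽] N) : Prop :=
  ∀ g : ZMod 2, ∀ x ∈ gr g, D x ∈ gr (g + ξ)

/-- `(N, br, α)` is a multiplicative `n`-Hom Lie superalgebra, where `n = m + 1`:
`N = N₀ ⊕ N₁` is `ℤ₂`-graded, the `n`-multilinear bracket `br` is even (adds degrees),
super skew-symmetric in adjacent arguments, `α` is even, multiplicative, and the super
Hom-Jacobi identity holds. -/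
structure IsMNHLS {m : ℕ} (gr : ZMod 2 → Submodule 𝔽 N)
    (br : MultilinearMap 𝔽 (fun _ : Fin (m + 1) => N) N) (α : N →ₗ[𝔽] N) : Prop where
  internal : DirectSum.IsInternal gr
  alpha_even : ∀ g : ZMod 2, ∀ x ∈ gr g, α x ∈ gr g
  br_deg : ∀ (d : Fin (m + 1) → ZMod 2) (x : Fin (m + 1) → N),
      (∀ i, x i ∈ gr (d i)) → br x ∈ gr (∑ i, d i)
  skew : ∀ (d : Fin (m + 1) → ZMod 2) (x : Fin (m + 1) → N),
      (∀ i, x i ∈ gr (d i)) → ∀ i j : Fin (m + 1), (i : ℕ) + 1 = (j : ℕ) →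
      br x = -sgn 𝔽 (d i * d j) • br (x ∘ Equiv.swap i j)
  alpha_br : ∀ x : Fin (m + 1) → N, α (br x) = br fun i => α (x i)
  jacobi : ∀ (dx : Fin m → ZMod 2) (x : Fin m → N)
      (dy : Fin (m + 1) → ZMod 2) (y : Fin (m + 1) → N),
      (∀ i, x i ∈ gr (dx i)) → (∀ i, y i ∈ gr (dy i)) →
      br (Fin.snoc (fun i => α (x i)) (br y)) =
        ∑ i : Fin (m + 1), sgn 𝔽 ((∑ j, dx j) * psum dy i) •
          br (Function.update (fun j => α (y j)) i (br (Fin.snoc x (y i))))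

/-- `D` is a homogeneous `α^k`-derivation of degree `ξ`. -/
def IsDer {m : ℕ} (gr : ZMod 2 → Submodule 𝔽 N)
    (br : MultilinearMap 𝔽 (fun _ : Fin (m + 1) => N) N) (α : N →ₗ[𝔽] N)
    (k : ℕ) (ξ : ZMod 2) (D : N →ₗ[𝔽] N) : Prop :=
  Homog gr ξ D ∧ D ∘ₗ α = α ∘ₗ D ∧
    ∀ (d : Fin (m + 1) → ZMod 2) (x : Fin (m + 1) → N), (∀ i, x i ∈ gr (d i)) →
      D (br x) = ∑ i : Fin (m + 1), sgn 𝔽 (ξ * psum d i) •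
        br (Function.update (fun j => (α ^ k) (x j)) i (D (x i)))

/-- `D` is a homogeneous `α^k`-quasiderivation of degree `ξ` with associated map `D'`. -/
def IsQDerWith {m : ℕ} (gr : ZMod 2 → Submodule 𝔽 N)
    (br : MultilinearMap 𝔽 (fun _ : Fin (m + 1) => N) N) (α : N →ₗ[𝔽] N)
    (k : ℕ) (ξ : ZMod 2) (D D' : N →ₗ[𝔽] N) : Prop :=
  Homog gr ξ D ∧ D ∘ₗ α = α ∘ₗ D ∧ Homog gr ξ D' ∧ D' ∘ₗ α = α ∘ₗ D' ∧
    ∀ (d : Fin (m + 1) → ZMod 2) (x : Fin (m + 1) → N), (∀ i, x i ∈ gr (d i)) →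
      (∑ i : Fin (m + 1), sgn 𝔽 (ξ * psum d i) •
        br (Function.update (fun j => (α ^ k) (x j)) i (D (x i)))) = D' (br x)

/-- `D` is a homogeneous `α^k`-quasiderivation of degree `ξ`. -/
def IsQDer {m : ℕ} (gr : ZMod 2 → Submodule 𝔽 N)
    (br : MultilinearMap 𝔽 (fun _ : Fin (m + 1) => N) N) (α : N →ₗ[𝔽] N)
    (k : ℕ) (ξ : ZMod 2) (D : N →ₗ[𝔽] N) : Prop :=
  ∃ D' : N →ₗ[𝔽] N, IsQDerWith gr br α k ξ D D'

/-- `D` is a homogeneous generalized `α^k`-derivation of degree `ξ`: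
there are `D⁽¹⁾, …, D⁽ⁿ⁾` (here `DD i` for positions `i = 1, …, n-1`, with `DD 0 = D`,
and `Dn = D⁽ⁿ⁾`) all homogeneous of degree `ξ` and commuting with `α`, satisfying the
defining identity. -/
def IsGDer {m : ℕ} (gr : ZMod 2 → Submodule 𝔽 N)
    (br : MultilinearMap 𝔽 (fun _ : Fin (m + 1) => N) N) (α : N →ₗ[𝔽] N)
    (k : ℕ) (ξ : ZMod 2) (D : N →ₗ[𝔽] N) : Prop :=
  Homog gr ξ D ∧ D ∘ₗ α = α ∘ₗ D ∧
    ∃ (DD : Fin (m + 1) → (N →ₗ[𝔽] N)) (Dn : N →ₗ[𝔽] N),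
      DD 0 = D ∧ (∀ i, Homog gr ξ (DD i)) ∧ (∀ i, DD i ∘ₗ α = α ∘ₗ DD i) ∧
      Homog gr ξ Dn ∧ Dn ∘ₗ α = α ∘ₗ Dn ∧
      ∀ (d : Fin (m + 1) → ZMod 2) (x : Fin (m + 1) → N), (∀ i, x i ∈ gr (d i)) →
        (∑ i : Fin (m + 1), sgn 𝔽 (ξ * psum d i) •
          br (Function.update (fun j => (α ^ k) (x j)) i (DD i (x i)))) = Dn (br x)

/-- `D` is a homogeneous `α^k`-centroid element of degree `ξ`. -/
def IsCent {m : ℕ} (gr : ZMod 2 → Submodule 𝔽 N)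
    (br : MultilinearMap 𝔽 (fun _ : Fin (m + 1) => N) N) (α : N →ₗ[𝔽] N)
    (k : ℕ) (ξ : ZMod 2) (D : N →ₗ[𝔽] N) : Prop :=
  Homog gr ξ D ∧ D ∘ₗ α = α ∘ₗ D ∧
    ∀ (d : Fin (m + 1) → ZMod 2) (x : Fin (m + 1) → N), (∀ i, x i ∈ gr (d i)) →
      (∀ i : Fin (m + 1),
        br (Function.update (fun j => (α ^ k) (x j)) 0 (D (x 0))) =
          sgn 𝔽 (ξ * psum d i) •
            br (Function.update (fun j => (α ^ k) (x j)) i (D (x i)))) ∧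
      br (Function.update (fun j => (α ^ k) (x j)) 0 (D (x 0))) = D (br x)

/-- `D` is a homogeneous `α^k`-quasicentroid element of degree `ξ`. -/
def IsQCent {m : ℕ} (gr : ZMod 2 → Submodule 𝔽 N)
    (br : MultilinearMap 𝔽 (fun _ : Fin (m + 1) => N) N) (α : N →ₗ[𝔽] N)
    (k : ℕ) (ξ : ZMod 2) (D : N →ₗ[𝔽] N) : Prop :=
  Homog gr ξ D ∧ D ∘ₗ α = α ∘ₗ D ∧
    ∀ (d : Fin (m + 1) → ZMod 2) (x : Fin (m + 1) → N), (∀ i, x i ∈ gr (d i)) →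
      ∀ i : Fin (m + 1),
        br (Function.update (fun j => (α ^ k) (x j)) 0 (D (x 0))) =
          sgn 𝔽 (ξ * psum d i) •
            br (Function.update (fun j => (α ^ k) (x j)) i (D (x i)))

/-- `D` is a homogeneous `α^k`-center derivation of degree `ξ`. -/
def IsZDer {m : ℕ} (gr : ZMod 2 → Submodule 𝔽 N)
    (br : MultilinearMap 𝔽 (fun _ : Fin (m + 1) => N) N) (α : N →ₗ[𝔽] N)
    (k : ℕ) (ξ : ZMod 2) (D : N →ₗ[𝔽] N) : Prop :=
  Homog gr ξ D ∧ D ∘ₗ α = α ∘ₗ D ∧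
    ∀ (d : Fin (m + 1) → ZMod 2) (x : Fin (m + 1) → N), (∀ i, x i ∈ gr (d i)) →
      br (Function.update (fun j => (α ^ k) (x j)) 0 (D (x 0))) = 0 ∧ D (br x) = 0

/-- The center `Z(N) = {x : [x, y₂, …, yₙ] = 0}`. -/
def center {m : ℕ} (br : MultilinearMap 𝔽 (fun _ : Fin (m + 1) => N) N) :
    Submodule 𝔽 N where
  carrier := {x | ∀ y : Fin (m + 1) → N, br (Function.update y 0 x) = 0}
  add_mem' := by
    intro a b ha hb y
    rw [MultilinearMap.map_update_add, ha y, hb y, add_zero]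
  zero_mem' := by
    intro y
    exact br.map_update_zero y 0
  smul_mem' := by
    intro c a ha y
    rw [MultilinearMap.map_update_smul, ha y, smul_zero]

/-- The Jordan product `D • E = ½(DE + (-1)^{|D||E|} ED)` of operators of degrees `ξ, η`. -/
def jprod (𝔽 : Type*) [Field 𝔽] {N : Type*} [AddCommGroup N] [Module 𝔽 N]
    (ξ η : ZMod 2) (D E : N →ₗ[𝔽] N) : N →ₗ[𝔽] N :=
  (2 : 𝔽)⁻¹ • (D ∘ₗ E + sgn 𝔽 (ξ * η) • (E ∘ₗ D))

/-- The Hom-associator of the Jordan product with respect to `α̃(u) = α ∘ u`, where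
`x, y, z` have degrees `a, b, c`. -/
def jassoc (𝔽 : Type*) [Field 𝔽] {N : Type*} [AddCommGroup N] [Module 𝔽 N]
    (α : N →ₗ[𝔽] N) (a b c : ZMod 2) (x y z : N →ₗ[𝔽] N) : N →ₗ[𝔽] N :=
  jprod 𝔽 (a + b) c (jprod 𝔽 a b x y) (α ∘ₗ z) -
    jprod 𝔽 a (b + c) (α ∘ₗ x) (jprod 𝔽 b c y z)

/-- The bracket subalgebra `[N, …, N]`, the span of all brackets. -/
def brSub {m : ℕ} (br : MultilinearMap 𝔽 (fun _ : Fin (m + 1) => N) N) :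
    Submodule 𝔽 N :=
  Submodule.span 𝔽 (Set.range fun x : Fin (m + 1) → N => br x)

/-- The bracket of `Ň = Nt + Ntⁿ` (modelled as `N × N`, first coordinate the coefficient
of `t`, second the coefficient of `tⁿ`): `[x₁t, …, xₙt] = [x₁, …, xₙ]tⁿ` and every bracket
involving a `tⁿ`-term vanishes. -/
def checkBr {m : ℕ} (br : MultilinearMap 𝔽 (fun _ : Fin (m + 1) => N) N) :
    MultilinearMap 𝔽 (fun _ : Fin (m + 1) => N × N) (N × N) :=
  (LinearMap.inr 𝔽 N N).compMultilinearMap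
    (br.compLinearMap fun _ => LinearMap.fst 𝔽 N N)

/-- The grading of `Ň = Nt + Ntⁿ`. -/
def checkGr (gr : ZMod 2 → Submodule 𝔽 N) (g : ZMod 2) : Submodule 𝔽 (N × N) :=
  (gr g).prod (gr g)

/-- The map `φ(D) : Ň → Ň`, `φ(D)(at + utⁿ + btⁿ) = D(a)t + D'(b)tⁿ`, where `π` is the
projection of `N` onto `[N, …, N]` along `U`. -/
def phiMap (D D' π : N →ₗ[𝔽] N) : N × N →ₗ[𝔽] N × N :=
  LinearMap.prodMap D (D' ∘ₗ π)

lemma sgn_zero : sgn 𝔽 0 = 1 := if_pos rfl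

lemma sgn_add (a b : ZMod 2) : sgn 𝔽 (a + b) = sgn 𝔽 a * sgn 𝔽 b := by
  have h : ∀ c : ZMod 2, c = 0 ∨ c = 1 := by decide
  obtain rfl | rfl := h a <;> obtain rfl | rfl := h b <;>
    simp [sgn, show (1 + 1 : ZMod 2) = 0 from rfl]

lemma sgn_mul_self (a : ZMod 2) : sgn 𝔽 a * sgn 𝔽 a = 1 := by
  rw [← sgn_add, CharTwo.add_self_eq_zero, sgn_zero]

lemma psum_zero {m : ℕ} (d : Fin (m + 1) → ZMod 2) : psum d 0 = 0 := by
  simp [psum]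

lemma psum_update_self {m : ℕ} (d : Fin m → ZMod 2) (i : Fin m) (c : ZMod 2) :
    psum (Function.update d i c) i = psum d i :=
  Finset.sum_congr rfl fun _ hj => Function.update_of_ne (Finset.mem_filter.1 hj).2.ne _ _

lemma psum_update_add_of_lt {m : ℕ} (d : Fin m → ZMod 2) {i j : Fin m} (hji : j < i)
    (c : ZMod 2) : psum (Function.update d j (d j + c)) i = psum d i + c := by
  have hj : j ∈ Finset.univ.filter (· < i) := by simpa using hji
  rw [psum, Finset.sum_update_of_mem hj, psum, ← Finset.add_sum_erase _ d hj,
    ← Finset.erase_eq]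
  ring

lemma Homog.zero (gr : ZMod 2 → Submodule 𝔽 N) (ξ : ZMod 2) : Homog gr ξ 0 :=
  fun _ _ _ => Submodule.zero_mem _

lemma Homog.add {gr : ZMod 2 → Submodule 𝔽 N} {ξ : ZMod 2} {D E : N →ₗ[𝔽] N}
    (hD : Homog gr ξ D) (hE : Homog gr ξ E) : Homog gr ξ (D + E) :=
  fun g x hx => add_mem (hD g x hx) (hE g x hx)

lemma Homog.smul {gr : ZMod 2 → Submodule 𝔽 N} {ξ : ZMod 2} {D : N →ₗ[𝔽] N}
    (c : 𝔽) (hD : Homog gr ξ D) : Homog gr ξ (c • D) :=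
  fun g x hx => Submodule.smul_mem _ c (hD g x hx)

lemma Homog.comp {gr : ZMod 2 → Submodule 𝔽 N} {ξ η : ZMod 2} {D E : N →ₗ[𝔽] N}
    (hD : Homog gr ξ D) (hE : Homog gr η E) : Homog gr (ξ + η) (D ∘ₗ E) := by
  intro g x hx
  simpa [add_assoc, add_comm η] using hD _ _ (hE g x hx)

lemma Homog.pow {gr : ZMod 2 → Submodule 𝔽 N} {α : N →ₗ[𝔽] N} (hα : Homog gr 0 α) :
    ∀ k : ℕ, Homog gr 0 (α ^ k)
  | 0 => fun g x hx => by simpa using hx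
  | k + 1 => by simpa [pow_succ, Module.End.mul_eq_comp] using (Homog.pow hα k).comp hα

def slotMap {ι : Type*} [DecidableEq ι] (A D : N →ₗ[𝔽] N) (i : ι) (x : ι → N) : ι → N :=
  Function.update (fun j => A (x j)) i (D (x i))

section slotMap

variable {ι : Type*} [DecidableEq ι]

lemma slotMap_slotMap_self (A B D E : N →ₗ[𝔽] N) (i : ι) (x : ι → N) :
    slotMap A D i (slotMap B E i x) = slotMap (A * B) (D * E) i x := by
  funext j
  rcases eq_or_ne j i with rfl | hj
  · simp [slotMap]
  · simp [slotMap, Function.update_of_ne hj]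

lemma slotMap_comm {A B D E : N →ₗ[𝔽] N} (hAB : Commute A B) (hDB : Commute D B)
    (hAE : Commute A E) {i i' : ι} (hi : i ≠ i') (x : ι → N) :
    slotMap A D i (slotMap B E i' x) = slotMap B E i' (slotMap A D i x) := by
  funext j
  rcases eq_or_ne j i with rfl | hj
  · simpa [slotMap, hi] using LinearMap.congr_fun hDB.eq (x j)
  rcases eq_or_ne j i' with rfl | hj'
  · simpa [slotMap, hj] using LinearMap.congr_fun hAE.eq (x j)
  · simpa [slotMap, hj, hj'] using LinearMap.congr_fun hAB.eq (x j)

lemma slotMap_mem {gr : ZMod 2 → Submodule 𝔽 N} {A D : N →ₗ[𝔽] N} {ξ : ZMod 2}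
    (hA : Homog gr 0 A) (hD : Homog gr ξ D) {d : ι → ZMod 2} {x : ι → N}
    (hx : ∀ j, x j ∈ gr (d j)) (i : ι) (j : ι) :
    slotMap A D i x j ∈ gr (Function.update d i (d i + ξ) j) := by
  rcases eq_or_ne j i with rfl | hj
  · simpa [slotMap] using hD _ _ (hx j)
  · simpa [slotMap, hj] using hA _ _ (hx j)

lemma map_slotMap_add {M : Type*} [AddCommGroup M] [Module 𝔽 M]
    (br : MultilinearMap 𝔽 (fun _ : ι => N) M) (A D E : N →ₗ[𝔽] N) (i : ι) (x : ι → N) :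
    br (slotMap A (D + E) i x) = br (slotMap A D i x) + br (slotMap A E i x) :=
  br.map_update_add _ i _ _

lemma map_slotMap_smul {M : Type*} [AddCommGroup M] [Module 𝔽 M]
    (br : MultilinearMap 𝔽 (fun _ : ι => N) M) (A D : N →ₗ[𝔽] N) (c : 𝔽) (i : ι)
    (x : ι → N) : br (slotMap A (c • D) i x) = c • br (slotMap A D i x) :=
  br.map_update_smul _ i c _

end slotMap

section IsQCent

variable {m : ℕ} {gr : ZMod 2 → Submodule 𝔽 N}
  {br : MultilinearMap 𝔽 (fun _ : Fin (m + 1) => N) N} {α : N →ₗ[𝔽] N}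

lemma IsQCent.commute {k : ℕ} {ξ : ZMod 2} {D : N →ₗ[𝔽] N} (hD : IsQCent gr br α k ξ D) :
    Commute D α :=
  hD.2.1

lemma IsQCent.map_slotMap {k : ℕ} {ξ : ZMod 2} {D : N →ₗ[𝔽] N}
    (hD : IsQCent gr br α k ξ D) {d : Fin (m + 1) → ZMod 2} {x : Fin (m + 1) → N}
    (hx : ∀ j, x j ∈ gr (d j)) (i : Fin (m + 1)) :
    br (slotMap (α ^ k) D 0 x) = sgn 𝔽 (ξ * psum d i) • br (slotMap (α ^ k) D i x) :=
  hD.2.2 d x hx i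

variable (gr br α) in
def quasicentroid (k : ℕ) (ξ : ZMod 2) : Submodule 𝔽 (Module.End 𝔽 N) where
  carrier := {D | IsQCent gr br α k ξ D}
  zero_mem' := ⟨Homog.zero gr ξ, by simp, fun d x _ i => by simp⟩
  add_mem' {D E} hD hE := ⟨hD.1.add hE.1, hD.commute.add_left hE.commute, fun d x hx i => by
    change br (slotMap _ _ 0 x) = _ • br (slotMap _ _ i x)
    rw [map_slotMap_add, map_slotMap_add, hD.map_slotMap hx i, hE.map_slotMap hx i, smul_add]⟩
  smul_mem' c D hD := ⟨hD.1.smul c, hD.commute.smul_left c, fun d x hx i => by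
    change br (slotMap _ _ 0 x) = _ • br (slotMap _ _ i x)
    rw [map_slotMap_smul, map_slotMap_smul, hD.map_slotMap hx i, smul_comm]⟩

lemma mem_quasicentroid {k : ℕ} {ξ : ZMod 2} {D : N →ₗ[𝔽] N} :
    D ∈ quasicentroid gr br α k ξ ↔ IsQCent gr br α k ξ D :=
  Iff.rfl

lemma IsQCent.map_slotMap_comp (hα : Homog gr 0 α) {k s : ℕ} {ξ η : ZMod 2}
    {D E : N →ₗ[𝔽] N} (hD : IsQCent gr br α k ξ D) (hE : IsQCent gr br α s η E)
    {d : Fin (m + 1) → ZMod 2} {x : Fin (m + 1) → N} (hx : ∀ j, x j ∈ gr (d j))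
    {i : Fin (m + 1)} (hi : i ≠ 0) :
    br (slotMap (α ^ (k + s)) (D * E) 0 x) =
      (sgn 𝔽 ((ξ + η) * psum d i) * sgn 𝔽 (ξ * η)) •
        br (slotMap (α ^ (k + s)) (E * D) i x) := by
  have hcomm : slotMap (α ^ k) D i (slotMap (α ^ s) E 0 x) =
      slotMap (α ^ s) E 0 (slotMap (α ^ k) D i x) :=
    slotMap_comm (Commute.pow_pow_self α k s) (hD.commute.pow_right s)
      (hE.commute.pow_right k).symm hi x
  have hsign : sgn 𝔽 (ξ * (psum d i + η)) * sgn 𝔽 (η * psum d i) =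
      sgn 𝔽 ((ξ + η) * psum d i) * sgn 𝔽 (ξ * η) := by
    rw [← sgn_add, ← sgn_add]
    congr 1
    ring
  calc br (slotMap (α ^ (k + s)) (D * E) 0 x)
      = br (slotMap (α ^ k) D 0 (slotMap (α ^ s) E 0 x)) := by
        rw [slotMap_slotMap_self, pow_add]
    _ = sgn 𝔽 (ξ * (psum d i + η)) • br (slotMap (α ^ s) E 0 (slotMap (α ^ k) D i x)) := by
        rw [hD.map_slotMap (slotMap_mem (hα.pow s) hE.1 hx 0) i, hcomm,
          psum_update_add_of_lt d (Fin.pos_of_ne_zero hi)]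
    _ = (sgn 𝔽 ((ξ + η) * psum d i) * sgn 𝔽 (ξ * η)) •
          br (slotMap (α ^ (k + s)) (E * D) i x) := by
        rw [hE.map_slotMap (slotMap_mem (hα.pow k) hD.1 hx i) i, psum_update_self,
          slotMap_slotMap_self, ← pow_add, add_comm s, smul_smul, hsign]

lemma IsQCent.comp_add_sgn_smul_comp (hα : Homog gr 0 α) {k s : ℕ} {ξ η : ZMod 2}
    {D E : N →ₗ[𝔽] N} (hD : IsQCent gr br α k ξ D) (hE : IsQCent gr br α s η E) :
    IsQCent gr br α (k + s) (ξ + η) (D ∘ₗ E + sgn 𝔽 (ξ * η) • (E ∘ₗ D)) := by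
  refine ⟨(hD.1.comp hE.1).add ((add_comm η ξ ▸ hE.1.comp hD.1).smul _),
    (hD.commute.mul_left hE.commute).add_left ((hE.commute.mul_left hD.commute).smul_left _),
    fun d x hx i => ?_⟩
  rcases eq_or_ne i 0 with rfl | hi
  · simp [psum_zero, sgn_zero]
  have hDE := hD.map_slotMap_comp hα hE hx hi
  have hED := hE.map_slotMap_comp hα hD hx hi
  rw [add_comm s, add_comm η, mul_comm η] at hED
  change br (slotMap _ (D * E + _ • (E * D)) 0 x) = _ • br (slotMap _ (D * E + _ • (E * D)) i x)
  rw [map_slotMap_add, map_slotMap_smul, hDE, hED, map_slotMap_add, map_slotMap_smul,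
    smul_smul, ← mul_assoc, mul_comm (sgn 𝔽 (ξ * η)), mul_assoc, sgn_mul_self, mul_one,
    smul_add, smul_smul, add_comm]

end IsQCent

theorem qcent_lie_iff_assoc_general {𝔽 : Type*} [Field 𝔽] [CharZero 𝔽]
    {N : Type*} [AddCommGroup N] [Module 𝔽 N] {m : ℕ}
    (gr : ZMod 2 → Submodule 𝔽 N) (br : MultilinearMap 𝔽 (fun _ : Fin (m + 1) => N) N)
    (α : N →ₗ[𝔽] N) (H : IsMNHLS gr br α) :
    (∀ (k s : ℕ) (ξ η : ZMod 2) (D E : N →ₗ[𝔽] N),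
      IsQCent gr br α k ξ D → IsQCent gr br α s η E →
        IsQCent gr br α (k + s) (ξ + η) (D ∘ₗ E - sgn 𝔽 (ξ * η) • (E ∘ₗ D))) ↔
    (∀ (k s : ℕ) (ξ η : ZMod 2) (D E : N →ₗ[𝔽] N),
      IsQCent gr br α k ξ D → IsQCent gr br α s η E →
        IsQCent gr br α (k + s) (ξ + η) (D ∘ₗ E)) := by
  have hα : Homog gr 0 α := fun g x hx => by simpa using H.alpha_even g x hx
  constructor
  · intro hLie k s ξ η D E hD hE
    have hDE : D ∘ₗ E = (2 : 𝔽)⁻¹ • ((D ∘ₗ E - sgn 𝔽 (ξ * η) • (E ∘ₗ D)) +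
        (D ∘ₗ E + sgn 𝔽 (ξ * η) • (E ∘ₗ D))) := by
      module
    rw [← mem_quasicentroid, hDE]
    exact Submodule.smul_mem _ _
      (add_mem (hLie k s ξ η D E hD hE) (hD.comp_add_sgn_smul_comp hα hE))
  · intro hAssoc k s ξ η D E hD hE
    have hED := hAssoc s k η ξ E D hE hD
    rw [add_comm s, add_comm η] at hED
    exact (quasicentroid gr br α _ _).sub_mem (hAssoc k s ξ η D E hD hE)
      (Submodule.smul_mem _ _ hED)

/-- Proposition 3.9(1): `QC(N)` is closed under the supercommutator
`[D, E] = DE - (-1)^{|D||E|} ED` (i.e. is a Lie superalgebra) if and only if `QC(N)` is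
closed under composition (i.e. is a Hom-associative superalgebra). -/
theorem qcent_lie_iff_assoc {𝔽 : Type*} [Field 𝔽] [CharZero 𝔽]
    {N : Type*} [AddCommGroup N] [Module 𝔽 N] {m : ℕ} (hm : 1 ≤ m)
    (gr : ZMod 2 → Submodule 𝔽 N) (br : MultilinearMap 𝔽 (fun _ : Fin (m + 1) => N) N)
    (α : N →ₗ[𝔽] N) (H : IsMNHLS gr br α) :
    (∀ (k s : ℕ) (ξ η : ZMod 2) (D E : N →ₗ[𝔽] N),
      IsQCent gr br α k ξ D → IsQCent gr br α s η E →
        IsQCent gr br α (k + s) (ξ + η) (D ∘ₗ E - sgn 𝔽 (ξ * η) • (E ∘ₗ D))) ↔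
    (∀ (k s : ℕ) (ξ η : ZMod 2) (D E : N →ₗ[𝔽] N),
      IsQCent gr br α k ξ D → IsQCent gr br α s η E →
        IsQCent gr br α (k + s) (ξ + η) (D ∘ₗ E)) :=
  qcent_lie_iff_assoc_general gr br α H
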